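/- arXiv:1408.1211 — 8 statements merged into one kernel-verified Lean document; each statement's English description precedes it below -/
import Mathlib

section
/- A set function f : 2^M → ℝ≥0 is MPH-k if and only if f is monotone and for every S ⊆ M, the restriction f_S admits a positive lower envelope of rank k, i.e., a PH-k function g on 2^S with g(S) = f(S) and g(S') ≤ f(S') for all S' ⊆ S. -/
/-!
Nonnegative hyperedge weights make every PH-`k` function monotone, hence so is a maximum of
them. The PH-`k` function attaining `f` at `S`, with its weights cut down to subsets of `S`,
is a lower envelope of `f_S`. Conversely, an envelope `g_S` only charges subsets of `S`, so
`g_S X = g_S (X ∩ S) ≤ f (X ∩ S) ≤ f X`: the envelopes are PH-`k` minorants of a monotone `f`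
on all of `2^M`, and the one for `S` attains `f` at `S`.
-/

open Finset

universe u

/-- `v` is a PH-`k` function: it has a nonnegative hypergraph representation of rank at most `k`. -/
def IsPH {ι : Type u} (k : ℕ) (v : Finset ι → ℝ) : Prop :=
  ∃ h : Finset ι → ℝ, (∀ T, 0 ≤ h T) ∧ h ∅ = 0 ∧ (∀ T, k < T.card → h T = 0) ∧
    ∀ S, v S = ∑ T ∈ S.powerset, h T

/-- `v` is MPH-`k`: it is the pointwise (attained) maximum of a family of PH-`k` functions. -/
def IsMPH {ι : Type u} (k : ℕ) (v : Finset ι → ℝ) : Prop :=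
  ∃ (L : Type u) (g : L → Finset ι → ℝ),
    (∀ ℓ, IsPH k (g ℓ)) ∧ (∀ ℓ S, g ℓ S ≤ v S) ∧ ∀ S, ∃ ℓ, g ℓ S = v S

variable {ι : Type u}

/-- `h` is the hyperedge weight function of a positive lower envelope `S' ↦ ∑ T ⊆ S', h T`
of rank `k` of `f` restricted to `S`. -/
def IsPosLowerEnvelope (k : ℕ) (f : Finset ι → ℝ) (S : Finset ι) (h : Finset ι → ℝ) : Prop :=
  (∀ T, 0 ≤ h T) ∧ h ∅ = 0 ∧ (∀ T, k < T.card → h T = 0) ∧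
    (∀ T, ¬ T ⊆ S → h T = 0) ∧
    (∑ T ∈ S.powerset, h T) = f S ∧
    ∀ S' : Finset ι, S' ⊆ S → ∑ T ∈ S'.powerset, h T ≤ f S'

theorem sum_powerset_mono_of_nonneg {h : Finset ι → ℝ} (h0 : ∀ T, 0 ≤ h T) :
    Monotone fun S : Finset ι => ∑ T ∈ S.powerset, h T :=
  fun _ _ hST => sum_le_sum_of_subset_of_nonneg (powerset_mono.2 hST) fun T _ _ => h0 T

theorem sum_powerset_inter_eq_of_support [DecidableEq ι] {h : Finset ι → ℝ} {S : Finset ι}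
    (hsupp : ∀ T, ¬ T ⊆ S → h T = 0) (X : Finset ι) :
    ∑ T ∈ (X ∩ S).powerset, h T = ∑ T ∈ X.powerset, h T := by
  refine sum_subset (powerset_mono.2 inter_subset_left) fun T hTX hTXS => hsupp T fun hTS => ?_
  exact hTXS (mem_powerset.2 (subset_inter (mem_powerset.1 hTX) hTS))

theorem sum_powerset_ite_subset_of_subset [DecidableEq ι] (h : Finset ι → ℝ)
    {S S' : Finset ι} (hS' : S' ⊆ S) :
    ∑ T ∈ S'.powerset, (if T ⊆ S then h T else 0) = ∑ T ∈ S'.powerset, h T :=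
  sum_congr rfl fun _ hT => if_pos ((mem_powerset.1 hT).trans hS')

theorem IsPH.monotone {k : ℕ} {v : Finset ι → ℝ} (hv : IsPH k v) : Monotone v := by
  obtain ⟨h, h0, -, -, hrep⟩ := hv
  simpa only [← hrep] using sum_powerset_mono_of_nonneg h0

theorem IsMPH.monotone {k : ℕ} {f : Finset ι → ℝ} (hf : IsMPH k f) : Monotone f := by
  obtain ⟨L, g, hPH, hle, hmax⟩ := hf
  intro S T hST
  obtain ⟨ℓ, hℓ⟩ := hmax S
  calc f S = g ℓ S := hℓ.symm
    _ ≤ g ℓ T := (hPH ℓ).monotone hST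
    _ ≤ f T := hle ℓ T

theorem IsMPH.exists_isPosLowerEnvelope {k : ℕ} {f : Finset ι → ℝ} (hf : IsMPH k f)
    (S : Finset ι) : ∃ h, IsPosLowerEnvelope k f S h := by
  classical
  obtain ⟨L, g, hPH, hle, hmax⟩ := hf
  obtain ⟨ℓ, hℓ⟩ := hmax S
  obtain ⟨h, h0, hempty, hrank, hrep⟩ := hPH ℓ
  refine ⟨fun T => if T ⊆ S then h T else 0, fun T => ?_, by simp [hempty], fun T hT => ?_,
    fun T hT => if_neg hT, ?_, fun S' hS' => ?_⟩
  · dsimp only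
    split_ifs
    exacts [h0 T, le_rfl]
  · simp [hrank T hT]
  · rw [sum_powerset_ite_subset_of_subset h Subset.rfl, ← hrep, hℓ]
  · rw [sum_powerset_ite_subset_of_subset h hS', ← hrep]
    exact hle ℓ S'

theorem IsPosLowerEnvelope.sum_powerset_le {k : ℕ} {f : Finset ι → ℝ} {S : Finset ι}
    {h : Finset ι → ℝ} (hh : IsPosLowerEnvelope k f S h) (hf : Monotone f) (X : Finset ι) :
    ∑ T ∈ X.powerset, h T ≤ f X := by
  classical
  obtain ⟨-, -, -, hsupp, -, hle⟩ := hh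
  calc ∑ T ∈ X.powerset, h T = ∑ T ∈ (X ∩ S).powerset, h T :=
        (sum_powerset_inter_eq_of_support hsupp X).symm
    _ ≤ f (X ∩ S) := hle _ inter_subset_right
    _ ≤ f X := hf inter_subset_left

theorem isMPH_of_monotone_of_isPosLowerEnvelope {k : ℕ} {f : Finset ι → ℝ} (hf : Monotone f)
    (henv : ∀ S, ∃ h, IsPosLowerEnvelope k f S h) : IsMPH k f := by
  choose h hh using henv
  refine ⟨Finset ι, fun S X => ∑ T ∈ X.powerset, h S T, fun S => ?_,
    fun S X => (hh S).sum_powerset_le hf X, fun S => ⟨S, (hh S).2.2.2.2.1⟩⟩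
  obtain ⟨h0, hempty, hrank, -⟩ := hh S
  exact ⟨h S, h0, hempty, hrank, fun _ => rfl⟩

/-- A set function is MPH-`k` iff it is monotone and every restriction admits a
positive lower envelope of rank `k` (a PH-`k` function supported inside `S` agreeing
with `f` at `S` and never overestimating `f` on subsets of `S`). -/
theorem MPH_iff_monotone_PLE {ι : Type u} (k : ℕ) (f : Finset ι → ℝ) :
    IsMPH k f ↔
      ((∀ S T : Finset ι, S ⊆ T → f S ≤ f T) ∧
        ∀ S : Finset ι, ∃ h : Finset ι → ℝ,
          (∀ T, 0 ≤ h T) ∧ h ∅ = 0 ∧ (∀ T, k < T.card → h T = 0) ∧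
          (∀ T, ¬ T ⊆ S → h T = 0) ∧
          (∑ T ∈ S.powerset, h T) = f S ∧
          ∀ S' : Finset ι, S' ⊆ S → ∑ T ∈ S'.powerset, h T ≤ f S') :=
  ⟨fun hf => ⟨fun _ _ hST => hf.monotone hST, hf.exists_isPosLowerEnvelope⟩,
    fun ⟨hmono, henv⟩ => isMPH_of_monotone_of_isPosLowerEnvelope (fun _ _ => hmono _ _) henv⟩
end

section
/- Every MPH-k valuation is k-fractionally subadditive: if (a_T)_{T∈𝒯} is a fractional cover of all subsets of S of size at most k (i.e., for every s ⊆ S with |s| ≤ k, ∑_{T ∈ 𝒯 : T ⊇ s} a_T ≥ 1, with a_T ≥ 0), then v(S) ≤ ∑_{T∈𝒯} a_T · v(T). -/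
/-!
Write the PH-`k` function `g` that attains `v S` as `g X = ∑_{s ⊆ X} h s` with `h ≥ 0` supported
on sets of size at most `k`. Every hyperedge `s ⊆ S` with `h s ≠ 0` is then covered with total
weight at least `1`, so `v S = ∑_{s ⊆ S} h s ≤ ∑_{s ⊆ S} h s ∑_{T ⊇ s} a_T`, and exchanging the
sums gives `∑_T a_T g T ≤ ∑_T a_T v T`.
-/

open Finset

universe u

section

variable {ι : Type u} [DecidableEq ι]

theorem sum_powerset_mul_sum_filter_superset_eq (f a : Finset ι → ℝ) {S : Finset ι}
    {𝒯 : Finset (Finset ι)} (h𝒯 : ∀ T ∈ 𝒯, T ⊆ S) :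
    ∑ s ∈ S.powerset, f s * ∑ T ∈ 𝒯.filter (fun T => s ⊆ T), a T =
      ∑ T ∈ 𝒯, a T * ∑ s ∈ T.powerset, f s := by
  simp_rw [mul_sum]
  rw [sum_comm' (t' := 𝒯) (s' := powerset)]
  · exact sum_congr rfl fun _ _ => sum_congr rfl fun _ _ => mul_comm _ _
  · intro s T
    simp only [mem_powerset, mem_filter]
    exact ⟨fun ⟨_, hT, hsT⟩ => ⟨hsT, hT⟩, fun ⟨hsT, hT⟩ => ⟨hsT.trans (h𝒯 T hT), hT, hsT⟩⟩

theorem IsPH.le_sum_mul_of_cover {k : ℕ} {g : Finset ι → ℝ} (hg : IsPH k g)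
    {S : Finset ι} {𝒯 : Finset (Finset ι)} (h𝒯 : ∀ T ∈ 𝒯, T ⊆ S) (a : Finset ι → ℝ)
    (hcover : ∀ s : Finset ι, s ⊆ S → s.card ≤ k →
      1 ≤ ∑ T ∈ 𝒯.filter (fun T => s ⊆ T), a T) :
    g S ≤ ∑ T ∈ 𝒯, a T * g T := by
  obtain ⟨h, h_nonneg, -, h_rank, hg_eq⟩ := hg
  have hedge_le (s : Finset ι) (hs : s ∈ S.powerset) :
      h s ≤ h s * ∑ T ∈ 𝒯.filter (fun T => s ⊆ T), a T := by
    rcases le_or_gt s.card k with hsk | hks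
    · exact le_mul_of_one_le_right (h_nonneg s) (hcover s (mem_powerset.mp hs) hsk)
    · simp [h_rank s hks]
  calc g S = ∑ s ∈ S.powerset, h s := hg_eq S
    _ ≤ ∑ s ∈ S.powerset, h s * ∑ T ∈ 𝒯.filter (fun T => s ⊆ T), a T := sum_le_sum hedge_le
    _ = ∑ T ∈ 𝒯, a T * g T := by
      simp_rw [sum_powerset_mul_sum_filter_superset_eq h a h𝒯, hg_eq]

end

/-- Every MPH-`k` valuation is `k`-fractionally subadditive: for any fractional cover
of all subsets of `S` of size at most `k`, `v S ≤ ∑_T a_T · v T`. -/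
theorem MPH_k_fractionally_subadditive {ι : Type u} [DecidableEq ι] (k : ℕ)
    (v : Finset ι → ℝ) (hv : IsMPH k v) (S : Finset ι)
    (𝒯 : Finset (Finset ι)) (h𝒯 : ∀ T ∈ 𝒯, T ⊆ S)
    (a : Finset ι → ℝ) (ha : ∀ T ∈ 𝒯, 0 ≤ a T)
    (hcover : ∀ s : Finset ι, s ⊆ S → s.card ≤ k →
      1 ≤ ∑ T ∈ 𝒯.filter (fun T => s ⊆ T), a T) :
    v S ≤ ∑ T ∈ 𝒯, a T * v T := by
  obtain ⟨L, g, hPH, hg_le, hg_attains⟩ := hv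
  obtain ⟨ℓ, hℓ⟩ := hg_attains S
  calc v S = g ℓ S := hℓ.symm
    _ ≤ ∑ T ∈ 𝒯, a T * g ℓ T := (hPH ℓ).le_sum_mul_of_cover h𝒯 a hcover
    _ ≤ ∑ T ∈ 𝒯, a T * v T :=
      sum_le_sum fun T hT => mul_le_mul_of_nonneg_left (hg_le ℓ T) (ha T hT)
end

section
/- Every monotone set function whose hypergraph representation has positive rank k and whose negative hyperedges form a laminar family (of arbitrary rank) is in MPH-k. More generally, any nonnegative set function with positive rank k and laminar negative hyperedges admits a positive lower envelope of rank k. -/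
/-!
Induct on the number of negative hyperedges. Let `T₀` be an inclusion-minimal negative hyperedge;
its proper subsets carry total weight `P ≥ 0`, and `P + h T₀ = f T₀ ≥ 0`, so `P > 0`. Deleting `T₀`
and scaling the hyperedges strictly inside `T₀` by `c = (P + h T₀) / P ∈ [0, 1]` leaves `f`
unchanged on every superset of `T₀` and can only decrease it elsewhere. By laminarity, a remaining
negative hyperedge inside a set `S ⊉ T₀` is disjoint from `T₀`, so the new value at `S` is still at
least `f (S \ T₀) ≥ 0`. The rank of the positive part never grows, and once no negative hyperedge
is left we have a PH-`k` function.

For a monotone `f` and a set `S`, apply this to the hyperedges of `h` inside `S`: the resulting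
envelope is tight at `S` and lies below `f (X ∩ S) ≤ f X` everywhere.
-/

open Finset

universe u

section

variable {ι : Type u}

def powersetSum (h : Finset ι → ℝ) (S : Finset ι) : ℝ := ∑ T ∈ S.powerset, h T

def NegLaminar (h : Finset ι → ℝ) : Prop :=
  ∀ T T', h T < 0 → h T' < 0 → T ⊆ T' ∨ T' ⊆ T ∨ Disjoint T T'

def PosRankLE (k : ℕ) (h : Finset ι → ℝ) : Prop := ∀ T, 0 < h T → T.card ≤ k

theorem isPH_powersetSum {k : ℕ} {h : Finset ι → ℝ} (hnn : ∀ T, 0 ≤ h T) (h0 : h ∅ = 0)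
    (hk : PosRankLE k h) : IsPH k (powersetSum h) :=
  ⟨h, hnn, h0,
    fun T hT => ((hnn T).eq_or_lt.resolve_right fun hpos => (hk T hpos).not_gt hT).symm,
    fun _ => rfl⟩

theorem isMPH_of_forall_exists {k : ℕ} {f : Finset ι → ℝ}
    (hf : ∀ S, ∃ g, IsPH k g ∧ (∀ X, g X ≤ f X) ∧ g S = f S) : IsMPH k f := by
  choose g hPH hle heq using hf
  exact ⟨Finset ι, g, hPH, hle, fun S => ⟨S, heq S⟩⟩

section Absorb

variable [DecidableEq ι] {h : Finset ι → ℝ} {T₀ S T : Finset ι} {c : ℝ}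

def absorb (h : Finset ι → ℝ) (T₀ : Finset ι) (c : ℝ) (T : Finset ι) : ℝ :=
  if T = T₀ then 0 else if T ⊆ T₀ then c * h T else h T

theorem absorb_of_not_subset (hT : ¬T ⊆ T₀) : absorb h T₀ c T = h T := by
  rw [absorb, if_neg fun e => hT e.subset, if_neg hT]

theorem absorb_self : absorb h T₀ c T₀ = 0 := if_pos rfl

theorem absorb_of_ssubset (hT : T ⊂ T₀) : absorb h T₀ c T = c * h T := by
  rw [absorb, if_neg hT.ne, if_pos hT.subset]

theorem absorb_empty (h0 : h ∅ = 0) : absorb h T₀ c ∅ = 0 := by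
  simp [absorb, h0]

theorem neg_of_absorb_neg (hc : 0 ≤ c) (hmin : ∀ T ⊂ T₀, 0 ≤ h T)
    (hT : absorb h T₀ c T < 0) : h T < 0 ∧ ¬T ⊆ T₀ := by
  by_cases hsub : T ⊆ T₀
  · refine absurd hT (not_lt.2 ?_)
    rcases eq_or_ne T T₀ with rfl | hne
    · exact absorb_self.ge
    · have hss : T ⊂ T₀ := hsub.ssubset_of_ne hne
      rw [absorb_of_ssubset hss]
      exact mul_nonneg hc (hmin T hss)
  · rw [absorb_of_not_subset hsub] at hT
    exact ⟨hT, hsub⟩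

theorem pos_of_absorb_pos (hc : 0 ≤ c) (hT : 0 < absorb h T₀ c T) : 0 < h T := by
  unfold absorb at hT
  split_ifs at hT
  · exact absurd hT (lt_irrefl 0)
  · exact pos_of_mul_pos_right hT hc
  · exact hT

theorem powersetSum_absorb_of_subset (hS : T₀ ⊆ S) :
    powersetSum (absorb h T₀ c) S =
      powersetSum h S - h T₀ - (1 - c) * ∑ T ∈ T₀.ssubsets, h T := by
  have hout : ∀ T ∈ S.powerset, T ∉ T₀.powerset → h T - absorb h T₀ c T = 0 :=
    fun T _ hT => by rw [absorb_of_not_subset (mt mem_powerset.2 hT), sub_self]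
  have hinner : ∑ T ∈ T₀.ssubsets, (h T - absorb h T₀ c T) =
      (1 - c) * ∑ T ∈ T₀.ssubsets, h T := by
    rw [mul_sum]
    refine sum_congr rfl fun T hT => ?_
    rw [absorb_of_ssubset (mem_ssubsets.1 hT)]
    ring
  have hdiff : ∑ T ∈ S.powerset, (h T - absorb h T₀ c T) =
      h T₀ + (1 - c) * ∑ T ∈ T₀.ssubsets, h T := by
    rw [← sum_subset (powerset_mono.2 hS) hout, ← add_sum_erase _ _ (mem_powerset_self T₀)]
    rw [absorb_self, sub_zero, ← hinner]
    rfl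
  rw [sum_sub_distrib] at hdiff
  unfold powersetSum
  linarith

theorem powersetSum_absorb_le (hc : c ≤ 1) (hmin : ∀ T ⊂ T₀, 0 ≤ h T) (hS : ¬T₀ ⊆ S) :
    powersetSum (absorb h T₀ c) S ≤ powersetSum h S := by
  refine sum_le_sum fun T hT => ?_
  by_cases hsub : T ⊆ T₀
  · have hss : T ⊂ T₀ := hsub.ssubset_of_ne fun e => hS (e ▸ mem_powerset.1 hT)
    rw [absorb_of_ssubset hss]
    exact mul_le_of_le_one_left (hmin T hss) hc
  · rw [absorb_of_not_subset hsub]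

theorem powersetSum_absorb_nonneg (h0 : h ∅ = 0) (hlam : NegLaminar h) (hT₀ : h T₀ < 0)
    (hc : 0 ≤ c) (hmin : ∀ T ⊂ T₀, 0 ≤ h T) (hnn : 0 ≤ powersetSum h (S \ T₀))
    (hS : ¬T₀ ⊆ S) : 0 ≤ powersetSum (absorb h T₀ c) S := by
  have hagree : powersetSum h (S \ T₀) = powersetSum (absorb h T₀ c) (S \ T₀) := by
    refine sum_congr rfl fun T hT => ?_
    by_cases hsub : T ⊆ T₀
    · obtain rfl : T = ∅ :=
        subset_empty.1 fun x hx => ((mem_sdiff.1 (mem_powerset.1 hT hx)).2 (hsub hx)).elim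
      rw [absorb_empty h0, h0]
    · rw [absorb_of_not_subset hsub]
  have hrest : ∀ T ∈ S.powerset, T ∉ (S \ T₀).powerset → 0 ≤ absorb h T₀ c T := by
    intro T hTS hT
    refine not_lt.1 fun hneg => ?_
    obtain ⟨hTneg, hsub⟩ := neg_of_absorb_neg hc hmin hneg
    rcases hlam T T₀ hTneg hT₀ with h' | h' | h'
    · exact hsub h'
    · exact hS (h'.trans (mem_powerset.1 hTS))
    · exact hT (mem_powerset.2 (subset_sdiff.2 ⟨mem_powerset.1 hTS, h'⟩))
  calc 0 ≤ powersetSum h (S \ T₀) := hnn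
    _ = powersetSum (absorb h T₀ c) (S \ T₀) := hagree
    _ ≤ powersetSum (absorb h T₀ c) S :=
      sum_le_sum_of_subset_of_nonneg (powerset_mono.2 sdiff_subset) hrest

theorem exists_absorb (h0 : h ∅ = 0) (hnn : ∀ S, 0 ≤ powersetSum h S) (hlam : NegLaminar h)
    (hT₀ : h T₀ < 0) (hmin : ∀ T ⊂ T₀, 0 ≤ h T) :
    ∃ c, 0 ≤ c ∧ (∀ S, 0 ≤ powersetSum (absorb h T₀ c) S) ∧
      (∀ S, powersetSum (absorb h T₀ c) S ≤ powersetSum h S) ∧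
      ∀ S, T₀ ⊆ S → powersetSum (absorb h T₀ c) S = powersetSum h S := by
  set P := ∑ T ∈ T₀.ssubsets, h T
  have hP : P + h T₀ = powersetSum h T₀ := sum_erase_add _ _ (mem_powerset_self T₀)
  have hPT₀ : 0 ≤ P + h T₀ := hP ▸ hnn T₀
  have hPpos : 0 < P := by linarith
  have htight : ∀ S, T₀ ⊆ S →
      powersetSum (absorb h T₀ ((P + h T₀) / P)) S = powersetSum h S := fun S hS => by
    rw [powersetSum_absorb_of_subset hS]
    field_simp
    ring
  have hc : 0 ≤ (P + h T₀) / P := div_nonneg hPT₀ hPpos.le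
  have hc1 : (P + h T₀) / P ≤ 1 := (div_le_one hPpos).2 (by linarith)
  refine ⟨_, hc, fun S => ?_, fun S => ?_, htight⟩
  · by_cases hS : T₀ ⊆ S
    · exact htight S hS ▸ hnn S
    · exact powersetSum_absorb_nonneg h0 hlam hT₀ hc hmin (hnn _) hS
  · by_cases hS : T₀ ⊆ S
    · exact (htight S hS).le
    · exact powersetSum_absorb_le hc1 hmin hS

end Absorb

theorem exists_isPH_le_of_negLaminar (k : ℕ) (N : Finset (Finset ι)) (h : Finset ι → ℝ)
    (hN : ∀ T, h T < 0 → T ∈ N) (h0 : h ∅ = 0) (hnn : ∀ S, 0 ≤ powersetSum h S)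
    (hk : PosRankLE k h) (hlam : NegLaminar h) :
    ∃ g, IsPH k g ∧ (∀ S, g S ≤ powersetSum h S) ∧
      ∀ S, (∀ T, h T < 0 → T ⊆ S) → g S = powersetSum h S := by
  classical
  induction N using Finset.strongInduction generalizing h with
  | H N ih =>
  by_cases hpos : ∀ T, 0 ≤ h T
  · exact ⟨powersetSum h, isPH_powersetSum hpos h0 hk, fun _ => le_rfl, fun _ _ => rfl⟩
  push Not at hpos
  obtain ⟨T₀, hT₀, hT₀min⟩ := wellFounded_lt.has_min {T | h T < 0} hpos
  have hmin : ∀ T ⊂ T₀, 0 ≤ h T := fun T hT => not_lt.1 fun hneg => hT₀min T hneg hT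
  obtain ⟨c, hc, hnn', hle, heq⟩ := exists_absorb h0 hnn hlam hT₀ hmin
  have hneg : ∀ T, absorb h T₀ c T < 0 → h T < 0 ∧ ¬T ⊆ T₀ :=
    fun T hT => neg_of_absorb_neg hc hmin hT
  obtain ⟨g, hg, hgle, hgeq⟩ := ih (N.erase T₀) (erase_ssubset (hN T₀ hT₀)) (absorb h T₀ c)
    (fun T hT => mem_erase.2 ⟨fun e => (hneg T hT).2 (e ▸ Subset.refl T), hN T (hneg T hT).1⟩)
    (absorb_empty h0) hnn' (fun T hT => hk T (pos_of_absorb_pos hc hT))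
    (fun T T' hT hT' => hlam T T' (hneg T hT).1 (hneg T' hT').1)
  refine ⟨g, hg, fun S => (hgle S).trans (hle S), fun S hS => ?_⟩
  rw [hgeq S fun T hT => hS T (hneg T hT).1, heq S (hS T₀ hT₀)]

section Restrict

variable [DecidableEq ι] {h : Finset ι → ℝ} {S T : Finset ι}

def restrictTo (h : Finset ι → ℝ) (S T : Finset ι) : ℝ := if T ⊆ S then h T else 0

theorem restrictTo_of_ne_zero (hT : restrictTo h S T ≠ 0) : T ⊆ S ∧ restrictTo h S T = h T := by
  by_cases hsub : T ⊆ S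
  · exact ⟨hsub, if_pos hsub⟩
  · exact absurd (if_neg hsub) hT

theorem restrictTo_empty (h0 : h ∅ = 0) : restrictTo h S ∅ = 0 := by
  simp [restrictTo, h0]

theorem PosRankLE.restrictTo {k : ℕ} (hk : PosRankLE k h) : PosRankLE k (restrictTo h S) :=
  fun T hT => hk T ((restrictTo_of_ne_zero hT.ne').2 ▸ hT)

theorem NegLaminar.restrictTo (hlam : NegLaminar h) : NegLaminar (restrictTo h S) :=
  fun T T' hT hT' =>
    hlam T T' ((restrictTo_of_ne_zero hT.ne).2 ▸ hT) ((restrictTo_of_ne_zero hT'.ne).2 ▸ hT')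

theorem powersetSum_restrictTo (X : Finset ι) :
    powersetSum (restrictTo h S) X = powersetSum h (X ∩ S) := by
  unfold powersetSum restrictTo
  rw [← sum_filter]
  congr 1
  ext T
  simp only [mem_powerset, mem_filter, subset_inter_iff]

end Restrict

theorem exists_isPH_le_eq_of_monotone (k : ℕ) (h : Finset ι → ℝ) (S : Finset ι) (h0 : h ∅ = 0)
    (hnn : ∀ S, 0 ≤ powersetSum h S) (hk : PosRankLE k h) (hlam : NegLaminar h)
    (hmono : Monotone (powersetSum h)) :
    ∃ g, IsPH k g ∧ (∀ X, g X ≤ powersetSum h X) ∧ g S = powersetSum h S := by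
  classical
  obtain ⟨g, hg, hle, heq⟩ := exists_isPH_le_of_negLaminar k S.powerset (restrictTo h S)
    (fun T hT => mem_powerset.2 (restrictTo_of_ne_zero hT.ne).1) (restrictTo_empty h0)
    (fun X => powersetSum_restrictTo X ▸ hnn _) hk.restrictTo hlam.restrictTo
  refine ⟨g, hg, fun X => ?_, ?_⟩
  · calc g X ≤ powersetSum (restrictTo h S) X := hle X
      _ = powersetSum h (X ∩ S) := powersetSum_restrictTo X
      _ ≤ powersetSum h X := hmono inter_subset_left
  · rw [heq S fun T hT => (restrictTo_of_ne_zero hT.ne).1, powersetSum_restrictTo, inter_self]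

end

/-- Any nonnegative set function with positive rank `k` whose negative hyperedges form a
laminar family admits a positive lower envelope of rank `k`; if moreover it is monotone
then it is MPH-`k`. -/
theorem laminar_negative_hyperedges {ι : Type u} [Fintype ι] (k : ℕ)
    (f h : Finset ι → ℝ) (h0 : h ∅ = 0)
    (hrep : ∀ S, f S = ∑ T ∈ S.powerset, h T)
    (hnonneg : ∀ S, 0 ≤ f S)
    (hposrank : ∀ T, 0 < h T → T.card ≤ k)
    (hlaminar : ∀ T T', h T < 0 → h T' < 0 → T ⊆ T' ∨ T' ⊆ T ∨ Disjoint T T') :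
    (∃ g : Finset ι → ℝ, (∀ T, 0 ≤ g T) ∧ g ∅ = 0 ∧ (∀ T, k < T.card → g T = 0) ∧
      (∑ T ∈ (Finset.univ : Finset ι).powerset, g T) = f Finset.univ ∧
      ∀ S, ∑ T ∈ S.powerset, g T ≤ f S) ∧
    ((∀ S T : Finset ι, S ⊆ T → f S ≤ f T) → IsMPH k f) := by
  obtain rfl : f = powersetSum h := funext hrep
  refine ⟨?_, fun hmono => isMPH_of_forall_exists fun S =>
    exists_isPH_le_eq_of_monotone k h S h0 hnonneg hposrank hlaminar fun _ _ => hmono _ _⟩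
  obtain ⟨g, ⟨w, hw0, hwe, hwk, hwrep⟩, hle, heq⟩ :=
    exists_isPH_le_of_negLaminar k univ h (fun T _ => mem_univ T) h0 hnonneg hposrank hlaminar
  refine ⟨w, hw0, hwe, hwk, ?_, fun S => hwrep S ▸ hle S⟩
  rw [← hwrep, heq univ fun T _ => subset_univ T]
end

section
/- Every monotone set function with supermodular degree k is in MPH-(k+1). Concretely: if f is normalized, monotone, and every item supermodularly depends on at most k other items, then f admits a positive lower envelope of rank k+1 for every restriction to a subset. -/
open Finset

universe u

/-- `j'` supermodularly depends on `j`: there is a set `S` such that the marginal value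
of `j` given `S ∪ {j'}` exceeds the marginal value of `j` given `S`. -/
def SupDep {ι : Type u} [DecidableEq ι] (f : Finset ι → ℝ) (j j' : ι) : Prop :=
  ∃ S : Finset ι,
    f (insert j S) - f S < f (insert j (insert j' S)) - f (insert j' S)

/-!
Fix a linear order on the items. For every set `S`, charge each `j ∈ S` its marginal value `w j`
given its predecessors in `S`; these charges telescope to `f S`. Put the weight `w j` on the
hyperedge formed by `j` and its predecessors that supermodularly depend on `j`; it has at most
`k + 1` elements. The resulting PH-`(k+1)` function `g_S = anchoredFun f S` agrees with `f` at
`S`, and it stays below `f`: if the hyperedge of `j` lies in `X`, the predecessors of `j` in `S`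
missing from `S ∩ X` do not supermodularly depend on `j`, so dropping them can only increase the
marginal value of `j`. Hence `g_S X` is at most the telescoping sum for `S ∩ X`, which is
`f (S ∩ X) ≤ f X`.
-/

section Hypergraph

variable {ι : Type u} [DecidableEq ι]

theorem isPH_sum_filter_subset {α : Type*} (k : ℕ) (A : Finset α) (w : α → ℝ)
    (e : α → Finset ι) (hw : ∀ a ∈ A, 0 ≤ w a) (he : ∀ a ∈ A, (e a).Nonempty)
    (hcard : ∀ a ∈ A, #(e a) ≤ k) :
    IsPH k fun X => ∑ a ∈ A with e a ⊆ X, w a := by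
  refine ⟨fun T => ∑ a ∈ A with e a = T, w a,
    fun T => sum_nonneg fun a ha => hw a (mem_filter.1 ha).1, ?_, ?_, fun X => ?_⟩
  · refine sum_eq_zero fun a ha => ?_
    obtain ⟨haA, hea⟩ := mem_filter.1 ha
    exact absurd (hea ▸ he a haA) Finset.not_nonempty_empty
  · refine fun T hT => sum_eq_zero fun a ha => ?_
    obtain ⟨haA, rfl⟩ := mem_filter.1 ha
    exact absurd (hcard a haA) hT.not_ge
  · simp only [sum_fiberwise_eq_sum_filter, mem_powerset]

end Hypergraph

section Marginal

variable {ι : Type u} [DecidableEq ι]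

/-- The marginal value `f(j | S)`. -/
def marginal (f : Finset ι → ℝ) (j : ι) (S : Finset ι) : ℝ := f (insert j S) - f S

variable {f : Finset ι → ℝ}

theorem marginal_nonneg (hf : Monotone f) (j : ι) (S : Finset ι) : 0 ≤ marginal f j S :=
  sub_nonneg.2 (hf (subset_insert j S))

theorem not_supDep_iff {j j' : ι} :
    ¬ SupDep f j j' ↔ ∀ S, marginal f j (insert j' S) ≤ marginal f j S := by
  simp [SupDep, marginal]

theorem marginal_le_of_forall_not_supDep {j : ι} {A B : Finset ι} (hAB : A ⊆ B)
    (hB : ∀ j' ∈ B \ A, ¬ SupDep f j j') : marginal f j B ≤ marginal f j A := by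
  rw [← union_sdiff_of_subset hAB]
  generalize B \ A = C at hB ⊢
  induction C using Finset.induction_on with
  | empty => simp
  | insert a C _ ih =>
    rw [union_insert]
    exact (not_supDep_iff.1 (hB a (mem_insert_self a C)) _).trans
      (ih fun j' hj' => hB j' (mem_insert_of_mem hj'))

theorem sum_marginal_filter_lt [LinearOrder ι] (h0 : f ∅ = 0) (S : Finset ι) :
    ∑ j ∈ S, marginal f j {i ∈ S | i < j} = f S := by
  induction S using Finset.induction_on_max with
  | empty => simp [h0]
  | insert a s hlt ih =>
    have hprefix : ∀ x ∈ s, {i ∈ insert a s | i < x} = {i ∈ s | i < x} := fun x hx => by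
      rw [filter_insert, if_neg (hlt x hx).not_gt]
    have hfirst : {i ∈ insert a s | i < a} = s := by
      rw [filter_insert, if_neg (lt_irrefl a), filter_true_of_mem hlt]
    rw [sum_insert fun ha => lt_irrefl a (hlt a ha), hfirst, sum_congr rfl
      fun x hx => congrArg (marginal f x) (hprefix x hx), ih, marginal, sub_add_cancel]

end Marginal

section Anchored

variable {ι : Type u} [Fintype ι] [DecidableEq ι]

open Classical in
noncomputable def supDepFinset (f : Finset ι → ℝ) (j : ι) : Finset ι :=
  {j' | j' ≠ j ∧ SupDep f j j'}

theorem mem_supDepFinset {f : Finset ι → ℝ} {j j' : ι} :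
    j' ∈ supDepFinset f j ↔ j' ≠ j ∧ SupDep f j j' := by
  classical
  simp [supDepFinset]

theorem card_supDepFinset (f : Finset ι → ℝ) (j : ι) :
    #(supDepFinset f j) = ({j' | j' ≠ j ∧ SupDep f j j'} : Set ι).ncard := by
  rw [← Set.ncard_coe_finset]
  congr 1
  ext j'
  exact mem_supDepFinset

variable [LinearOrder ι] (f : Finset ι → ℝ) (S : Finset ι)

noncomputable def anchoredEdge (j : ι) : Finset ι :=
  insert j (supDepFinset f j ∩ {i ∈ S | i < j})

noncomputable def anchoredFun (X : Finset ι) : ℝ :=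
  ∑ j ∈ S with anchoredEdge f S j ⊆ X, marginal f j {i ∈ S | i < j}

variable {f}

theorem isPH_anchoredFun {k : ℕ} (hf : Monotone f) (hdeg : ∀ j, #(supDepFinset f j) ≤ k) :
    IsPH (k + 1) (anchoredFun f S) :=
  isPH_sum_filter_subset _ _ _ _ (fun j _ => marginal_nonneg hf j _)
    (fun _ _ => insert_nonempty _ _)
    fun j _ => (card_insert_le _ _).trans
      (Nat.succ_le_succ ((card_le_card inter_subset_left).trans (hdeg j)))

theorem anchoredFun_self (h0 : f ∅ = 0) : anchoredFun f S S = f S := by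
  have hedge : ∀ j ∈ S, anchoredEdge f S j ⊆ S := fun j hj =>
    insert_subset hj (inter_subset_right.trans (filter_subset _ S))
  rw [anchoredFun, filter_true_of_mem hedge, sum_marginal_filter_lt h0]

theorem marginal_le_of_anchoredEdge_subset {j : ι} {X : Finset ι}
    (hX : anchoredEdge f S j ⊆ X) :
    marginal f j {i ∈ S | i < j} ≤ marginal f j {i ∈ S ∩ X | i < j} := by
  refine marginal_le_of_forall_not_supDep (filter_subset_filter _ inter_subset_left)
    fun j' hj' hdep => ?_
  simp only [mem_sdiff, mem_filter, mem_inter, not_and] at hj'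
  obtain ⟨⟨hj'S, hj'j⟩, hj'X⟩ := hj'
  have hj'edge : j' ∈ anchoredEdge f S j := mem_insert_of_mem <|
    mem_inter.2 ⟨mem_supDepFinset.2 ⟨hj'j.ne, hdep⟩, mem_filter.2 ⟨hj'S, hj'j⟩⟩
  exact hj'X ⟨hj'S, hX hj'edge⟩ hj'j

theorem anchoredFun_le (hf : Monotone f) (h0 : f ∅ = 0) (X : Finset ι) :
    anchoredFun f S X ≤ f X := by
  have hsub : {j ∈ S | anchoredEdge f S j ⊆ X} ⊆ S ∩ X := fun j hj => by
    obtain ⟨hjS, hjX⟩ := mem_filter.1 hj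
    exact mem_inter.2 ⟨hjS, hjX (mem_insert_self j _)⟩
  calc anchoredFun f S X
      ≤ ∑ j ∈ S with anchoredEdge f S j ⊆ X, marginal f j {i ∈ S ∩ X | i < j} :=
        sum_le_sum fun j hj => marginal_le_of_anchoredEdge_subset S (mem_filter.1 hj).2
    _ ≤ ∑ j ∈ S ∩ X, marginal f j {i ∈ S ∩ X | i < j} :=
        sum_le_sum_of_subset_of_nonneg hsub fun j _ _ => marginal_nonneg hf j _
    _ = f (S ∩ X) := sum_marginal_filter_lt h0 _
    _ ≤ f X := hf inter_subset_right

theorem isMPH_of_card_supDepFinset_le {k : ℕ} (hf : Monotone f) (h0 : f ∅ = 0)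
    (hdeg : ∀ j, #(supDepFinset f j) ≤ k) : IsMPH (k + 1) f :=
  ⟨Finset ι, anchoredFun f, fun S => isPH_anchoredFun S hf hdeg,
    fun S => anchoredFun_le S hf h0, fun S => ⟨S, anchoredFun_self S h0⟩⟩

end Anchored

/-- Every normalized monotone set function of supermodular degree `k` is MPH-`(k+1)`. -/
theorem supermodular_degree_MPH {ι : Type u} [Fintype ι] [DecidableEq ι] (k : ℕ)
    (f : Finset ι → ℝ) (h0 : f ∅ = 0)
    (hmono : ∀ S T : Finset ι, S ⊆ T → f S ≤ f T)
    (hdeg : ∀ j : ι, ({j' | j' ≠ j ∧ SupDep f j j'} : Set ι).ncard ≤ k) :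
    IsMPH (k + 1) f := by
  let _ : LinearOrder ι := LinearOrder.lift' (Fintype.equivFin ι) (Fintype.equivFin ι).injective
  exact isMPH_of_card_supDepFinset_le hmono h0
    fun j => (card_supDepFinset f j).trans_le (hdeg j)
end

section
/- Every positive hypergraph function (a set function with a nonnegative hypergraph representation) approximates the function f₁(S) = 1 for nonempty S (f₁(∅)=0) within ratio no better than m, where m is the number of items: if g is a PH function with ρ₁ ≤ g(S)/f₁(S) ≤ ρ₂ for all nonempty S, then ρ₂/ρ₁ ≥ m. -/
/-!
Since `h ∅ = 0`, the value of `g` on a singleton `{i}` is the weight `h {i}`, so each of these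
`m` weights is at least `ρ₁`. All of them are summands of `g` on the whole ground set, whence
`m ρ₁ ≤ g univ ≤ ρ₂`.
-/

open Finset

section HypergraphRepresentation

variable {ι M : Type*} [AddCommMonoid M]

theorem sum_powerset_singleton [DecidableEq ι] (h : Finset ι → M) (i : ι) :
    ∑ T ∈ ({i} : Finset ι).powerset, h T = h ∅ + h {i} := by
  have hpowerset : ({i} : Finset ι).powerset = {∅, {i}} := by
    ext T
    simp [subset_singleton_iff]
  rw [hpowerset, sum_pair (singleton_ne_empty i).symm]

theorem sum_singleton_le_sum_powerset [PartialOrder M] [IsOrderedAddMonoid M]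
    {h : Finset ι → M} (hh : ∀ T, 0 ≤ h T) (S : Finset ι) :
    ∑ i ∈ S, h {i} ≤ ∑ T ∈ S.powerset, h T := by
  have hsub : S.map ⟨_, singleton_injective⟩ ⊆ S.powerset := by
    intro T hT
    obtain ⟨i, hi, rfl⟩ := mem_map.mp hT
    simpa using hi
  calc ∑ i ∈ S, h {i} = ∑ T ∈ S.map ⟨_, singleton_injective⟩, h T := by rw [sum_map]; rfl
    _ ≤ ∑ T ∈ S.powerset, h T := sum_le_sum_of_subset_of_nonneg hsub fun T _ _ => hh T

end HypergraphRepresentation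

/-- No positive hypergraph function can approximate `f₁` (the function equal to `1` on
every nonempty set) within a ratio better than `m`: if `ρ₁ ≤ g S / f₁ S ≤ ρ₂` for all
nonempty `S`, then `ρ₂ / ρ₁ ≥ m`. -/
theorem PH_cannot_approximate_unit {ι : Type*} [Fintype ι] [Nonempty ι] [DecidableEq ι]
    (f₁ : Finset ι → ℝ) (hf₁ : ∀ S : Finset ι, f₁ S = if S = ∅ then 0 else 1)
    (g h : Finset ι → ℝ) (hh : ∀ T, 0 ≤ h T) (h0 : h ∅ = 0)
    (hg : ∀ S, g S = ∑ T ∈ S.powerset, h T)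
    (ρ₁ ρ₂ : ℝ) (hρ₁ : 0 < ρ₁)
    (hratio : ∀ S : Finset ι, S ≠ ∅ → ρ₁ ≤ g S / f₁ S ∧ g S / f₁ S ≤ ρ₂) :
    (Fintype.card ι : ℝ) ≤ ρ₂ / ρ₁ := by
  have hg_bounds : ∀ S : Finset ι, S ≠ ∅ → ρ₁ ≤ g S ∧ g S ≤ ρ₂ := fun S hS => by
    simpa [hf₁, hS] using hratio S hS
  have hsingleton : ∀ i, ρ₁ ≤ h {i} := fun i => by
    simpa [hg, sum_powerset_singleton, h0] using (hg_bounds {i} (singleton_ne_empty i)).1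
  rw [le_div_iff₀ hρ₁]
  calc (Fintype.card ι : ℝ) * ρ₁ = ∑ _i : ι, ρ₁ := by simp
    _ ≤ ∑ i : ι, h {i} := sum_le_sum fun i _ => hsingleton i
    _ ≤ g univ := hg univ ▸ sum_singleton_le_sum_powerset hh univ
    _ ≤ ρ₂ := (hg_bounds univ univ_nonempty.ne_empty).2
end

section
/- Any nonnegative set function of positive rank 1 (all positive hyperedges are singletons, negative hyperedges arbitrary) admits a positive lower envelope of rank 1: there exist nonnegative weights w_j ≤ h({j}) on items such that ∑_{j∈M} w_j = f(M) and ∑_{j∈S} w_j ≤ f(S) for all S ⊆ M. -/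
/-!
A set function `f S = ∑_{T ⊆ S} h T` whose hyperedges of size at least two are nonpositive is
submodular: the hyperedges counted in `f (A ∪ B)` but in neither `f A` nor `f B` meet both
`A \ B` and `B \ A`. Replacing `f` by its monotone envelope `S ↦ min_{U ⊇ S} f U` keeps it
submodular, keeps `f ∅ = 0` (as `f ≥ 0`) and `f univ`, and makes it monotone. The greedy
weights of a monotone submodular function, `w a = g (insert a S) - g S` along a chain, are then
nonnegative, sum to `g univ` and are dominated by `g ≤ f` on every set.
-/

open Finset

section SetFunction

variable {ι : Type*} [DecidableEq ι]

def IsSubmodular (g : Finset ι → ℝ) : Prop :=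
  ∀ A B, g (A ∪ B) + g (A ∩ B) ≤ g A + g B

lemma two_le_card_of_subset_union {A B T : Finset ι} (hT : T ⊆ A ∪ B) (hA : ¬T ⊆ A)
    (hB : ¬T ⊆ B) : 2 ≤ #T := by
  obtain ⟨x, hxT, hxA⟩ := not_subset.mp hA
  obtain ⟨y, hyT, hyB⟩ := not_subset.mp hB
  have hyA : y ∈ A := (mem_union.mp (hT hyT)).resolve_right hyB
  exact one_lt_card.mpr ⟨x, hxT, y, hyT, fun hxy => hxA (hxy ▸ hyA)⟩

lemma isSubmodular_sum_powerset (h : Finset ι → ℝ) (hneg : ∀ T : Finset ι, 2 ≤ #T → h T ≤ 0) :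
    IsSubmodular fun S => ∑ T ∈ S.powerset, h T := by
  intro A B
  have hsub : A.powerset ∪ B.powerset ⊆ (A ∪ B).powerset :=
    union_subset (powerset_mono.mpr subset_union_left) (powerset_mono.mpr subset_union_right)
  have hcross : ∑ T ∈ (A ∪ B).powerset \ (A.powerset ∪ B.powerset), h T ≤ 0 := by
    refine sum_nonpos fun T hT => hneg T ?_
    simp only [mem_sdiff, mem_union, mem_powerset, not_or] at hT
    exact two_le_card_of_subset_union hT.1 hT.2.1 hT.2.2
  have hinter : (A ∩ B).powerset = A.powerset ∩ B.powerset := by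
    ext T
    simp only [mem_powerset, mem_inter, subset_inter_iff]
  have hsplit := sum_union_inter (s₁ := A.powerset) (s₂ := B.powerset) (f := h)
  dsimp only
  rw [← sum_sdiff hsub, hinter]
  linarith

lemma IsSubmodular.insert_sub_le {g : Finset ι → ℝ} (hg : IsSubmodular g) {a : ι}
    {S T : Finset ι} (haS : a ∉ S) (haT : a ∈ T) (hT : T ⊆ insert a S) :
    g (insert a S) - g S ≤ g T - g (T.erase a) := by
  have hunion : T ∪ S = insert a S := by
    rw [← insert_erase haT, insert_union, union_eq_right.mpr (subset_insert_iff.mp hT)]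
  have hinter : T ∩ S = T.erase a := by
    ext j
    have := @hT j
    grind
  have := hg T S
  rw [hunion, hinter] at this
  linarith

lemma exists_greedy_weights {g : Finset ι → ℝ} (hsub : IsSubmodular g) (hmono : Monotone g)
    (h0 : g ∅ = 0) (S : Finset ι) :
    ∃ w : ι → ℝ, (∀ j, 0 ≤ w j) ∧ ∑ j ∈ S, w j = g S ∧ ∀ T ⊆ S, ∑ j ∈ T, w j ≤ g T := by
  induction S using Finset.induction_on with
  | empty => exact ⟨0, fun _ => le_rfl, by simp [h0], fun T hT => by simp [h0, subset_empty.mp hT]⟩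
  | @insert a S haS ih =>
    obtain ⟨w, hw0, hwS, hwle⟩ := ih
    set w' := Function.update w a (g (insert a S) - g S)
    have hw'a : w' a = g (insert a S) - g S := Function.update_self ..
    have hsum_w' {T : Finset ι} (haT : a ∉ T) : ∑ j ∈ T, w' j = ∑ j ∈ T, w j :=
      sum_update_of_notMem haT _ _
    refine ⟨w', fun j => ?_, ?_, fun T hT => ?_⟩
    · rcases eq_or_ne j a with rfl | hja
      · simpa [hw'a] using hmono (subset_insert j S)
      · simpa [w', hja] using hw0 j
    · rw [sum_insert haS, hsum_w' haS, hwS, hw'a, sub_add_cancel]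
    · by_cases haT : a ∈ T
      · rw [← add_sum_erase T _ haT, hsum_w' (notMem_erase a T), hw'a]
        linarith [hsub.insert_sub_le haS haT hT, hwle (T.erase a) (subset_insert_iff.mp hT)]
      · rw [hsum_w' haT]
        exact hwle T ((subset_insert_iff_of_notMem haT).mp hT)

end SetFunction

section MonotoneEnvelope

variable {ι : Type*} [Fintype ι] [DecidableEq ι]

noncomputable def monotoneEnvelope (f : Finset ι → ℝ) (S : Finset ι) : ℝ :=
  ({U | S ⊆ U} : Finset (Finset ι)).inf' ⟨univ, by simp⟩ f

lemma monotoneEnvelope_le (f : Finset ι → ℝ) {S U : Finset ι} (hSU : S ⊆ U) :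
    monotoneEnvelope f S ≤ f U :=
  inf'_le f (by simpa using hSU)

lemma exists_monotoneEnvelope_eq (f : Finset ι → ℝ) (S : Finset ι) :
    ∃ U, S ⊆ U ∧ monotoneEnvelope f S = f U := by
  obtain ⟨U, hU, hfU⟩ :=
    exists_mem_eq_inf' (s := ({U | S ⊆ U} : Finset (Finset ι))) ⟨univ, by simp⟩ f
  exact ⟨U, by simpa using hU, hfU⟩

lemma monotoneEnvelope_eq_self {f : Finset ι → ℝ} {S : Finset ι}
    (hS : ∀ U, S ⊆ U → f S ≤ f U) : monotoneEnvelope f S = f S := by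
  obtain ⟨U, hSU, hU⟩ := exists_monotoneEnvelope_eq f S
  exact le_antisymm (monotoneEnvelope_le f subset_rfl) (hU ▸ hS U hSU)

lemma monotone_monotoneEnvelope (f : Finset ι → ℝ) : Monotone (monotoneEnvelope f) := by
  intro S T hST
  obtain ⟨U, hTU, hU⟩ := exists_monotoneEnvelope_eq f T
  exact hU ▸ monotoneEnvelope_le f (hST.trans hTU)

lemma IsSubmodular.monotoneEnvelope {f : Finset ι → ℝ} (hf : IsSubmodular f) :
    IsSubmodular (monotoneEnvelope f) := by
  intro A B
  obtain ⟨UA, hA, hUA⟩ := exists_monotoneEnvelope_eq f A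
  obtain ⟨UB, hB, hUB⟩ := exists_monotoneEnvelope_eq f B
  have hunion := monotoneEnvelope_le f (union_subset_union hA hB)
  have hinter := monotoneEnvelope_le f (inter_subset_inter hA hB)
  linarith [hf UA UB]

end MonotoneEnvelope

theorem positive_rank_one_PLE_general {ι : Type*} [Fintype ι] [DecidableEq ι]
    (f h : Finset ι → ℝ) (h0f : f ∅ = 0) (hnonneg : ∀ S, 0 ≤ f S)
    (hrep : ∀ S : Finset ι, f S = ∑ T ∈ S.powerset, h T)
    (hposrank : ∀ T : Finset ι, 2 ≤ T.card → h T ≤ 0) :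
    ∃ w : ι → ℝ, (∀ j, 0 ≤ w j) ∧ (∀ j, w j ≤ h {j}) ∧
      (∑ j, w j) = f Finset.univ ∧ ∀ S : Finset ι, ∑ j ∈ S, w j ≤ f S := by
  have hf : IsSubmodular f := funext hrep ▸ isSubmodular_sum_powerset h hposrank
  have hg0 : monotoneEnvelope f ∅ = 0 :=
    (monotoneEnvelope_eq_self fun U _ => h0f ▸ hnonneg U).trans h0f
  have hguniv : monotoneEnvelope f univ = f univ :=
    monotoneEnvelope_eq_self fun U hU => by rw [univ_subset_iff.mp hU]
  obtain ⟨w, hw0, hwsum, hwle⟩ :=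
    exists_greedy_weights hf.monotoneEnvelope (monotone_monotoneEnvelope f) hg0 univ
  have hwf (S : Finset ι) : ∑ j ∈ S, w j ≤ f S :=
    (hwle S (subset_univ S)).trans (monotoneEnvelope_le f subset_rfl)
  refine ⟨w, hw0, fun j => ?_, hwsum.trans hguniv, hwf⟩
  have hfj : f {j} = f ∅ + h {j} := by
    rw [hrep, hrep, ← insert_empty, sum_powerset_insert (notMem_empty j), powerset_empty,
      sum_singleton, sum_singleton]
  simpa [hfj, h0f] using hwf {j}

/-- Any nonnegative set function of positive rank 1 admits a positive lower envelope of
rank 1: nonnegative weights `w j ≤ h {j}` with `∑_{j∈M} w j = f M` and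
`∑_{j∈S} w j ≤ f S` for all `S`. -/
theorem positive_rank_one_PLE {ι : Type*} [Fintype ι] [DecidableEq ι]
    (f h : Finset ι → ℝ) (h0f : f ∅ = 0) (hnonneg : ∀ S, 0 ≤ f S)
    (h0 : h ∅ = 0) (hrep : ∀ S : Finset ι, f S = ∑ T ∈ S.powerset, h T)
    (hposrank : ∀ T : Finset ι, 2 ≤ T.card → h T ≤ 0) :
    ∃ w : ι → ℝ, (∀ j, 0 ≤ w j) ∧ (∀ j, w j ≤ h {j}) ∧
      (∑ j, w j) = f Finset.univ ∧ ∀ S : Finset ι, ∑ j ∈ S, w j ≤ f S :=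
  positive_rank_one_PLE_general f h h0f hnonneg hrep hposrank
end

section
/- For every k ∈ ℕ, there exists a nonnegative set function of hypergraph rank 2 that has no positive lower envelope of rank k. Concretely, on a ground set of m ≥ k+3 items with a special item j, define h({j}) = C(k+1,2), h({i}) = 0 for i ≠ j, h(e) = 1 for rank-2 edges not containing j and h(e) = −k for rank-2 edges containing j, and h = 0 otherwise; then the resulting function f is nonnegative but admits no positive lower envelope of rank ≤ k. -/
/-!
For `S ∋ j` with `l = |S| - 1` one has `f S = C(l,2) - l k + C(k+1,2) = (l - k)(l - k - 1)/2`,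
a product of consecutive integers over two, so `f ≥ 0`, and `f` vanishes on every `(k+1)`-set
through `j`. A nonnegative `w` with `∑_{T ⊆ S} w T ≤ f S` must therefore vanish on all subsets of
such sets, i.e. on all sets of size at most `k`; a rank-`k` envelope is then identically zero,
while `f M = (m - 1 - k)(m - 2 - k)/2 > 0`.
-/
open Finset

section
variable {ι : Type*} [DecidableEq ι]

def rankTwoWeight (k : ℕ) (j : ι) (T : Finset ι) : ℝ :=
  if T = {j} then ((k + 1).choose 2 : ℝ)
  else if T.card = 2 ∧ j ∈ T then -(k : ℝ)
  else if T.card = 2 then 1 else 0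

variable {k : ℕ} {j : ι} {R : Finset ι}

lemma rankTwoWeight_of_notMem {T : Finset ι} (hj : j ∉ T) :
    rankTwoWeight k j T = if T.card = 2 then 1 else 0 := by
  have : T ≠ {j} := by rintro rfl; simp at hj
  simp [rankTwoWeight, this, hj]

lemma rankTwoWeight_insert {T : Finset ι} (hj : j ∉ T) :
    rankTwoWeight k j (insert j T) =
      (if T = ∅ then ((k + 1).choose 2 : ℝ) else 0) + if T.card = 1 then -(k : ℝ) else 0 := by
  rcases T.eq_empty_or_nonempty with rfl | hT
  · simp [rankTwoWeight]
  · have hne : insert j T ≠ {j} := fun h => by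
      simpa [card_insert_of_notMem hj, hT.ne_empty] using congrArg card h
    by_cases h1 : T.card = 1 <;> simp [rankTwoWeight, hne, card_insert_of_notMem hj, hT.ne_empty, h1]

lemma sum_powerset_rankTwoWeight_of_notMem (hj : j ∉ R) :
    ∑ T ∈ R.powerset, rankTwoWeight k j T = (R.card.choose 2 : ℝ) := by
  rw [sum_congr rfl fun T hT => rankTwoWeight_of_notMem fun h => hj (mem_powerset.1 hT h),
    sum_boole, ← powersetCard_eq_filter, card_powersetCard]

lemma sum_powerset_rankTwoWeight_insert (hj : j ∉ R) :
    ∑ T ∈ (insert j R).powerset, rankTwoWeight k j T =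
      ((R.card : ℝ) - k) * ((R.card : ℝ) - k - 1) / 2 := by
  rw [sum_powerset_insert hj, sum_powerset_rankTwoWeight_of_notMem hj,
    sum_congr rfl fun T hT => rankTwoWeight_insert fun h => hj (mem_powerset.1 hT h),
    sum_add_distrib, sum_ite_eq' _ _ (fun _ => _), ← sum_filter, sum_const,
    ← powersetCard_eq_filter, card_powersetCard, Nat.choose_one_right]
  simp only [Nat.cast_choose_two, mem_powerset, empty_subset, ↓reduceIte, Nat.cast_add,
    Nat.cast_one, add_sub_cancel_right, smul_neg, nsmul_eq_mul]
  ring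

lemma sum_powerset_rankTwoWeight_of_mem {S : Finset ι} (hj : j ∈ S) :
    ∑ T ∈ S.powerset, rankTwoWeight k j T =
      ((S.card : ℝ) - (k + 1)) * ((S.card : ℝ) - (k + 2)) / 2 := by
  obtain ⟨R, hjR, rfl⟩ : ∃ R, j ∉ R ∧ insert j R = S :=
    ⟨S.erase j, notMem_erase j S, insert_erase hj⟩
  rw [sum_powerset_rankTwoWeight_insert hjR, card_insert_of_notMem hjR]
  push_cast
  ring

lemma sum_powerset_rankTwoWeight_nonneg (k : ℕ) (j : ι) (S : Finset ι) :
    0 ≤ ∑ T ∈ S.powerset, rankTwoWeight k j T := by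
  by_cases hj : j ∈ S
  · rw [sum_powerset_rankTwoWeight_of_mem hj]
    have : (0 : ℤ) ≤ (S.card - (k + 1)) * (S.card - (k + 2)) := by
      nlinarith [Int.le_self_sq ((S.card : ℤ) - (k + 1))]
    have : (0 : ℝ) ≤ ((S.card : ℝ) - (k + 1)) * ((S.card : ℝ) - (k + 2)) := by exact_mod_cast this
    positivity
  · rw [sum_powerset_rankTwoWeight_of_notMem hj]
    positivity

lemma sum_powerset_rankTwoWeight_eq_zero {S : Finset ι} (hj : j ∈ S) (hS : S.card = k + 1) :
    ∑ T ∈ S.powerset, rankTwoWeight k j T = 0 := by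
  rw [sum_powerset_rankTwoWeight_of_mem hj, hS]
  push_cast
  ring

lemma sum_powerset_rankTwoWeight_pos {S : Finset ι} (hj : j ∈ S) (hS : k + 3 ≤ S.card) :
    0 < ∑ T ∈ S.powerset, rankTwoWeight k j T := by
  rw [sum_powerset_rankTwoWeight_of_mem hj]
  have : (k : ℝ) + 3 ≤ S.card := by exact_mod_cast hS
  have : (0 : ℝ) < ((S.card : ℝ) - (k + 1)) * ((S.card : ℝ) - (k + 2)) := by
    apply mul_pos <;> linarith
  positivity

end

lemma eq_zero_of_sum_powerset_nonpos {ι M : Type*} [AddCommMonoid M] [PartialOrder M]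
    [IsOrderedAddMonoid M] {w : Finset ι → M} (hw : ∀ T, 0 ≤ w T) {S T : Finset ι}
    (hTS : T ⊆ S) (hS : ∑ U ∈ S.powerset, w U ≤ 0) : w T = 0 :=
  (single_le_sum (fun U _ => hw U) (mem_powerset.2 hTS)).trans hS |>.antisymm (hw T)

/-- For every `k`, on a ground set of `m ≥ k+3` items with a special item `j`, the
nonnegative rank-2 set function with `h {j} = C(k+1,2)`, `h = −k` on pairs containing
`j`, `h = 1` on pairs not containing `j`, and `h = 0` otherwise, admits no positive
lower envelope of rank `k`. -/
theorem no_PLE_rank_k_example {ι : Type*} [Fintype ι] [DecidableEq ι]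
    (k : ℕ) (hm : k + 3 ≤ Fintype.card ι) (j : ι)
    (h : Finset ι → ℝ)
    (hdef : ∀ T : Finset ι, h T =
      if T = {j} then ((k + 1).choose 2 : ℝ)
      else if T.card = 2 ∧ j ∈ T then -(k : ℝ)
      else if T.card = 2 then 1 else 0)
    (f : Finset ι → ℝ) (fdef : ∀ S : Finset ι, f S = ∑ T ∈ S.powerset, h T) :
    (∀ S, 0 ≤ f S) ∧
    ¬ ∃ w : Finset ι → ℝ, (∀ T, 0 ≤ w T) ∧ w ∅ = 0 ∧ (∀ T, k < T.card → w T = 0) ∧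
      (∑ T ∈ (Finset.univ : Finset ι).powerset, w T) = f Finset.univ ∧
      ∀ S : Finset ι, ∑ T ∈ S.powerset, w T ≤ f S := by
  obtain rfl : f = fun S => ∑ T ∈ S.powerset, h T := funext fdef
  obtain rfl : h = rankTwoWeight k j := funext hdef
  refine ⟨sum_powerset_rankTwoWeight_nonneg k j, ?_⟩
  rintro ⟨w, hw, -, hwk, hw_univ, hw_le⟩
  have hw_zero : ∀ T, w T = 0 := fun T => by
    rcases le_or_gt T.card k with hT | hT
    · obtain ⟨S, hjTS, -, hS⟩ := exists_subsuperset_card_eq (subset_univ (insert j T))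
        ((card_insert_le j T).trans (Nat.succ_le_succ hT)) (by rw [card_univ]; omega)
      exact eq_zero_of_sum_powerset_nonpos hw ((subset_insert j T).trans hjTS)
        ((hw_le S).trans_eq (sum_powerset_rankTwoWeight_eq_zero (hjTS (mem_insert_self j T)) hS))
    · exact hwk T hT
  have hf_univ := sum_powerset_rankTwoWeight_pos (k := k) (mem_univ j)
    (show k + 3 ≤ (univ : Finset ι).card from hm)
  simp only [hw_zero, sum_const_zero] at hw_univ
  linarith
end

section
/- Canonical PLE for symmetric functions: let f : {0,…,m} → ℝ≥0 be monotone symmetric with f(0)=0, and let g_R be the symmetric PH-R function whose hypergraph representation gives each R-subset weight f(m)/C(m,R). Then f (viewed as a set function) has a positive lower envelope of rank R if and only if g_R(t) := C(t,R)·f(m)/C(m,R) ≤ f(t) for all 0 ≤ t ≤ m. -/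
/-!
Write an envelope as `g S = ∑ T ⊆ S, w T` with nonnegative weights on sets of size at most `R`.
Summing `g S ≤ f t` over all `t`-sets `S` counts each `T` exactly `C(m - |T|, t - |T|)` times, and
`C(m, t) C(t, R) ≤ C(m - k, t - k) C(m, R)` for `k ≤ R ≤ t`, so any envelope forces
`C(t, R) f(m) / C(m, R) ≤ f t`. Conversely, for `R ≤ m` the uniform weight `f(m) / C(m, R)` on the
`R`-sets is an envelope exactly under this condition, and for `R > m` the single weight `f(m)` on
the full set is one.
-/

open Finset

theorem Nat.choose_le_choose_add_add (n k d : ℕ) : n.choose k ≤ (n + d).choose (k + d) := by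
  induction d with
  | zero => rfl
  | succ d ih =>
    rw [← Nat.add_assoc, ← Nat.add_assoc, Nat.choose_succ_succ']
    exact ih.trans (Nat.le_add_right _ _)

theorem Nat.choose_mul_choose_le_choose_sub_mul {k R t : ℕ} (m : ℕ) (hkR : k ≤ R) (hRt : R ≤ t) :
    m.choose t * t.choose R ≤ (m - k).choose (t - k) * m.choose R := by
  rw [Nat.choose_mul hRt, Nat.mul_comm]
  rcases le_or_gt R m with hRm | hmR
  · refine Nat.mul_le_mul_right _ ?_
    have h := Nat.choose_le_choose_add_add (m - R) (t - R) (R - k)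
    rwa [show m - R + (R - k) = m - k by omega, show t - R + (R - k) = t - k by omega] at h
  · simp [Nat.choose_eq_zero_of_lt hmR]

theorem Finset.sum_powersetCard_sum_powerset {α M : Type*} [DecidableEq α] [AddCommMonoid M]
    (U : Finset α) (t : ℕ) (w : Finset α → M) :
    ∑ S ∈ U.powersetCard t, ∑ T ∈ S.powerset, w T =
      ∑ T ∈ U.powerset, #{S ∈ U.powersetCard t | T ⊆ S} • w T := by
  rw [sum_comm' (t' := U.powerset) (s' := fun T => {S ∈ U.powersetCard t | T ⊆ S})]
  · simp only [sum_const]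
  · simp only [mem_filter, mem_powersetCard, mem_powerset]
    intro S T
    constructor
    · rintro ⟨⟨hSU, hS⟩, hTS⟩
      exact ⟨⟨⟨hSU, hS⟩, hTS⟩, hTS.trans hSU⟩
    · rintro ⟨⟨⟨hSU, hS⟩, hTS⟩, -⟩
      exact ⟨⟨hSU, hS⟩, hTS⟩

def rankWeights {ι : Type*} (R : ℕ) (c : ℝ) (T : Finset ι) : ℝ := if #T = R then c else 0

theorem sum_powerset_rankWeights {ι : Type*} (R : ℕ) (c : ℝ) (S : Finset ι) :
    ∑ T ∈ S.powerset, rankWeights R c T = (#S).choose R * c := by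
  simp only [rankWeights]
  rw [← sum_filter, ← powersetCard_eq_filter, sum_const, card_powersetCard, nsmul_eq_mul]

section

variable {ι : Type*} [Fintype ι]

theorem choose_mul_sum_div_le {R t : ℕ} {w : Finset ι → ℝ} {b : ℝ}
    (hw0 : ∀ T, 0 ≤ w T) (hwR : ∀ T : Finset ι, R < #T → w T = 0) (hRt : R ≤ t)
    (ht : t ≤ Fintype.card ι) (hS : ∀ S : Finset ι, #S = t → ∑ T ∈ S.powerset, w T ≤ b) :
    (t.choose R : ℝ) * ((∑ T ∈ univ.powerset, w T) / (Fintype.card ι).choose R) ≤ b := by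
  classical
  set m := Fintype.card ι
  have hmR : (0 : ℝ) < m.choose R := by exact_mod_cast Nat.choose_pos (hRt.trans ht)
  have hmt : (0 : ℝ) < m.choose t := by exact_mod_cast Nat.choose_pos ht
  have hcount : ∀ T ∈ (univ : Finset ι).powerset,
      m.choose t * (t.choose R / m.choose R : ℝ) * w T ≤
        #{S ∈ univ.powersetCard t | T ⊆ S} • w T := by
    intro T _
    rcases le_or_gt #T R with hTR | hTR
    · rw [nsmul_eq_mul, card_filter_powersetCard_subset T univ t (subset_univ T)
        (hTR.trans hRt), card_univ]
      refine mul_le_mul_of_nonneg_right ?_ (hw0 T)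
      rw [← mul_div_assoc, div_le_iff₀ hmR]
      exact_mod_cast Nat.choose_mul_choose_le_choose_sub_mul m hTR hRt
    · simp [hwR T hTR]
  refine le_of_mul_le_mul_left ?_ hmt
  calc (m.choose t : ℝ) * (t.choose R * ((∑ T ∈ univ.powerset, w T) / m.choose R))
      = ∑ T ∈ univ.powerset, m.choose t * (t.choose R / m.choose R : ℝ) * w T := by
        rw [← mul_sum]; ring
    _ ≤ ∑ T ∈ univ.powerset, #{S ∈ univ.powersetCard t | T ⊆ S} • w T := sum_le_sum hcount
    _ = ∑ S ∈ univ.powersetCard t, ∑ T ∈ S.powerset, w T :=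
        (sum_powersetCard_sum_powerset _ _ _).symm
    _ ≤ ∑ S ∈ univ.powersetCard t, b := sum_le_sum fun S hSt => hS S (mem_powersetCard.1 hSt).2
    _ = m.choose t * b := by simp [m]

/-- `w` holds the hypergraph coefficients of the envelope `S ↦ ∑ T ⊆ S, w T`; nonnegative
coefficients supported on sets of size at most `R` make it a positive PH-`R` function. -/
def IsPLEWeights (R : ℕ) (f : ℕ → ℝ) (w : Finset ι → ℝ) : Prop :=
  (∀ T, 0 ≤ w T) ∧ w ∅ = 0 ∧ (∀ T, R < #T → w T = 0) ∧
    (∑ T ∈ univ.powerset, w T) = f (Fintype.card ι) ∧ ∀ S : Finset ι, ∑ T ∈ S.powerset, w T ≤ f #S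

theorem isPLEWeights_rankWeights {R : ℕ} {f : ℕ → ℝ}
    (hR : R ≤ Fintype.card ι) (hf0 : f 0 = 0) (hfm : 0 ≤ f (Fintype.card ι))
    (hg : ∀ t ≤ Fintype.card ι,
      (t.choose R : ℝ) * (f (Fintype.card ι) / (Fintype.card ι).choose R) ≤ f t) :
    IsPLEWeights R f
      (rankWeights R (f (Fintype.card ι) / (Fintype.card ι).choose R) : Finset ι → ℝ) := by
  have hc : 0 ≤ f (Fintype.card ι) / (Fintype.card ι).choose R := by positivity
  refine ⟨fun T => ?_, ?_, fun T hT => if_neg hT.ne', ?_, fun S => ?_⟩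
  · unfold rankWeights; split_ifs <;> simp [hc]
  · rcases Nat.eq_zero_or_pos R with rfl | hR0
    · have := hg 0 (Nat.zero_le _)
      simp only [Nat.choose_zero_right, Nat.cast_one, div_one, one_mul, hf0] at this
      simp [rankWeights, le_antisymm this hfm]
    · exact if_neg (by simpa using hR0.ne)
  · rw [sum_powerset_rankWeights, card_univ]
    field_simp [(Nat.choose_pos hR).ne']
  · rw [sum_powerset_rankWeights]
    exact hg #S (card_le_univ S)

theorem isPLEWeights_ite_univ [DecidableEq ι] {R : ℕ} {f : ℕ → ℝ}
    (hR : Fintype.card ι < R) (hf0 : f 0 = 0) (hnn : ∀ i ≤ Fintype.card ι, 0 ≤ f i) :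
    IsPLEWeights R f fun T : Finset ι => if T = univ then f (Fintype.card ι) else 0 := by
  refine ⟨fun T => ?_, ?_, fun T hT => ?_, ?_, fun S => ?_⟩
  · dsimp only
    split_ifs
    exacts [hnn _ le_rfl, le_rfl]
  · dsimp only
    split_ifs with h
    · rw [← card_univ, ← h, card_empty, hf0]
    · rfl
  · exact absurd ((card_le_univ T).trans_lt hR) hT.not_gt
  · simp
  · rw [sum_ite_eq']
    split_ifs with h
    · rw [univ_subset_iff.1 (mem_powerset.1 h), card_univ]
    · exact hnn _ (card_le_univ S)

end

theorem symmetric_canonical_PLE_general {ι : Type*} [Fintype ι] (m R : ℕ)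
    (hm : Fintype.card ι = m) (f : ℕ → ℝ) (hf0 : f 0 = 0)
    (hnn : ∀ i : ℕ, i ≤ m → 0 ≤ f i) :
    (∃ w : Finset ι → ℝ, (∀ T, 0 ≤ w T) ∧ w ∅ = 0 ∧ (∀ T, R < T.card → w T = 0) ∧
        (∑ T ∈ (Finset.univ : Finset ι).powerset, w T) = f m ∧
        ∀ S : Finset ι, ∑ T ∈ S.powerset, w T ≤ f S.card) ↔
      ∀ t : ℕ, t ≤ m → (t.choose R : ℝ) * (f m / (m.choose R : ℝ)) ≤ f t := by
  classical
  subst hm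
  change (∃ w : Finset ι → ℝ, IsPLEWeights R f w) ↔ _
  constructor
  · rintro ⟨w, hw0, -, hwR, hwsum, henv⟩ t ht
    rcases lt_or_ge t R with htR | hRt
    · simpa [Nat.choose_eq_zero_of_lt htR] using hnn t ht
    · rw [← hwsum]
      exact choose_mul_sum_div_le hw0 hwR hRt ht fun S hS => hS ▸ henv S
  · intro hg
    rcases le_or_gt R (Fintype.card ι) with hR | hR
    · exact ⟨_, isPLEWeights_rankWeights hR hf0 (hnn _ le_rfl) hg⟩
    · exact ⟨_, isPLEWeights_ite_univ hR hf0 hnn⟩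

/-- Canonical PLE criterion for symmetric functions: a monotone symmetric set function
`S ↦ f |S|` on `m` items has a positive lower envelope of rank `R` iff the canonical
symmetric candidate satisfies `C(t,R) · f(m)/C(m,R) ≤ f t` for all `t ≤ m`. -/
theorem symmetric_canonical_PLE {ι : Type*} [Fintype ι] (m R : ℕ)
    (hm : Fintype.card ι = m) (f : ℕ → ℝ) (hf0 : f 0 = 0)
    (hmono : ∀ i j : ℕ, i ≤ j → j ≤ m → f i ≤ f j)
    (hnn : ∀ i : ℕ, i ≤ m → 0 ≤ f i) :
    (∃ w : Finset ι → ℝ, (∀ T, 0 ≤ w T) ∧ w ∅ = 0 ∧ (∀ T, R < T.card → w T = 0) ∧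
        (∑ T ∈ (Finset.univ : Finset ι).powerset, w T) = f m ∧
        ∀ S : Finset ι, ∑ T ∈ S.powerset, w T ≤ f S.card) ↔
      ∀ t : ℕ, t ≤ m → (t.choose R : ℝ) * (f m / (m.choose R : ℝ)) ≤ f t :=
  symmetric_canonical_PLE_general m R hm f hf0 hnn
end
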